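/- Let N ≥ 1. In EuclideanSpace ℝ (Fin (N+1)) with standard basis e₁, …, e_{N+1}, define ψ₀ := (1/√2)·e₁ + ∑_{i=2}^{N} (1/√(2^i))·e_i + (1/√(2^N))·e_{N+1}, ψ₁ := −(1/√2)·e₁ + ∑_{i=2}^{N} (1/√(2^i))·e_i + (1/√(2^N))·e_{N+1}, and for 2 ≤ k ≤ N, ψ_k := −(1/√2)·e_k + ∑_{i=k+1}^{N} (1/√(2^{i−k+1}))·e_i + (1/√(2^{N−k+1}))·e_{N+1}. Then the family (ψ₀, ψ₁, …, ψ_N) of N+1 vectors is orthonormal. -/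

import Mathlib

/-- The receiver's decoding measurement vectors in the N-sender coherence-assisted
protocol (coordinates are 0-based: coordinate `j` corresponds to path `e_{j+1}`,
and coordinate `N` is the assistance path `e_{N+1}`).

* `decode N 0 = (1/√2)·e₁ + ∑_{i=2}^{N} (1/√(2^i))·e_i + (1/√(2^N))·e_{N+1}`,
* `decode N 1` is the same with the `e₁`-coordinate negated,
* for `2 ≤ k ≤ N`,
  `decode N k = −(1/√2)·e_k + ∑_{i=k+1}^{N} (1/√(2^{i−k+1}))·e_i + (1/√(2^{N−k+1}))·e_{N+1}`. -/
noncomputable def decode (N : ℕ) (k : Fin (N + 1)) : EuclideanSpace ℝ (Fin (N + 1)) :=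
  (WithLp.equiv 2 (Fin (N + 1) → ℝ)).symm (fun j =>
    if (k : ℕ) ≤ 1 then
      (if (j : ℕ) = 0 then (if (k : ℕ) = 0 then 1 else -1) / Real.sqrt 2
       else if (j : ℕ) < N then 1 / Real.sqrt (2 ^ ((j : ℕ) + 1))
       else 1 / Real.sqrt (2 ^ N))
    else
      (if (j : ℕ) = (k : ℕ) - 1 then -(1 / Real.sqrt 2)
       else if (k : ℕ) - 1 < (j : ℕ) ∧ (j : ℕ) < N then
         1 / Real.sqrt (2 ^ ((j : ℕ) - (k : ℕ) + 2))
       else if (j : ℕ) = N then 1 / Real.sqrt (2 ^ (N - (k : ℕ) + 1))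
       else 0))

/-!
Write `e_j` for the standard basis (0-based) and
`u m := ∑_{m ≤ j < N} (√2)^{-(j-m+1)} e_j + (√2)^{-(N-m)} e_N` (`geomTail N m`).
Then `u N = e_N` and `u m = (u (m+1) + e_m)/√2`, so every `u m` is a unit vector by downward
induction, since `u (m+1)` vanishes below coordinate `m + 1`. The decoding vectors are
`ψ₀ = u 0` and `ψ_{p+1} = (u (p+1) - e_p)/√2` (`flipTail N p`): the pair `u p`, `ψ_{p+1}` is
the Hadamard transform of the orthonormal pair `u (p+1)`, `e_p`. As `ψ_{p+1}` vanishes below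
coordinate `p`, the recursion for `u` propagates `u p ⊥ ψ_{p+1}` down to `u m ⊥ ψ_{p+1}` for
all `m ≤ p`; this gives `ψ₀ ⊥ ψ_{p+1}`, and `ψ_{a+1} ⊥ ψ_{p+1}` for `a < p`.
-/

open Real RealInnerProductSpace

lemma inv_sqrt_two_pow (n : ℕ) : (√(2 ^ n))⁻¹ = (√2)⁻¹ ^ n := by
  have h : (2 : ℝ) ^ n = (√2 ^ n) ^ 2 := by rw [← pow_mul, mul_comm, pow_mul, sq_sqrt zero_le_two]
  rw [inv_pow, h, sqrt_sq (by positivity)]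

section InnerProductSpace

variable {E : Type*} [NormedAddCommGroup E] [InnerProductSpace ℝ E] {x y : E}

lemma norm_inv_sqrt_two_smul {v : E} (hv : ‖v‖ * ‖v‖ = 2) : ‖(√2)⁻¹ • v‖ = 1 := by
  have : ‖v‖ = √2 := by rw [← hv, sqrt_mul_self (norm_nonneg v)]
  rw [norm_smul, this, norm_inv, norm_of_nonneg (sqrt_nonneg 2),
    inv_mul_cancel₀ (sqrt_ne_zero'.mpr two_pos)]

lemma norm_inv_sqrt_two_smul_add (hx : ‖x‖ = 1) (hy : ‖y‖ = 1) (hxy : ⟪x, y⟫ = 0) :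
    ‖(√2)⁻¹ • (x + y)‖ = 1 :=
  norm_inv_sqrt_two_smul (by rw [norm_add_sq_eq_norm_sq_add_norm_sq_real hxy, hx, hy]; norm_num)

lemma norm_inv_sqrt_two_smul_sub (hx : ‖x‖ = 1) (hy : ‖y‖ = 1) (hxy : ⟪x, y⟫ = 0) :
    ‖(√2)⁻¹ • (x - y)‖ = 1 :=
  norm_inv_sqrt_two_smul (by rw [norm_sub_sq_eq_norm_sq_add_norm_sq_real hxy, hx, hy]; norm_num)

lemma inner_inv_sqrt_two_smul_add_sub (h : ‖x‖ = ‖y‖) :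
    ⟪(√2)⁻¹ • (x + y), (√2)⁻¹ • (x - y)⟫ = 0 := by
  rw [real_inner_smul_left, real_inner_smul_right, (real_inner_add_sub_eq_zero_iff x y).mpr h,
    mul_zero, mul_zero]

end InnerProductSpace

lemma orthonormal_fin_cons {𝕜 E : Type*} [RCLike 𝕜] [NormedAddCommGroup E] [InnerProductSpace 𝕜 E]
    {n : ℕ} {x : E} {v : Fin n → E} (hv : Orthonormal 𝕜 v) (hx : ‖x‖ = 1)
    (hxv : ∀ i, inner 𝕜 x (v i) = 0) : Orthonormal 𝕜 (Fin.cons x v : Fin (n + 1) → E) := by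
  refine ⟨fun i => i.cases hx hv.1, fun i j hij => ?_⟩
  cases i using Fin.cases <;> cases j using Fin.cases
  · exact absurd rfl hij
  · exact hxv _
  · exact inner_eq_zero_symm.mp (hxv _)
  · exact hv.2 fun h => hij (congrArg Fin.succ h)

variable (N : ℕ)

noncomputable def geomTail (m : Fin (N + 1)) : EuclideanSpace ℝ (Fin (N + 1)) :=
  WithLp.toLp 2 fun j =>
    if j < m then 0 else if (j : ℕ) < N then (√2)⁻¹ ^ ((j : ℕ) - m + 1) else (√2)⁻¹ ^ (N - m)

noncomputable def flipTail (p : Fin N) : EuclideanSpace ℝ (Fin (N + 1)) :=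
  (√2)⁻¹ • (geomTail N p.succ - EuclideanSpace.single p.castSucc 1)

lemma geomTail_apply_of_lt {m j : Fin (N + 1)} (h : j < m) : geomTail N m j = 0 := by
  simp [geomTail, h]

lemma geomTail_last : geomTail N (Fin.last N) = EuclideanSpace.single (Fin.last N) 1 := by
  ext j
  rcases (Fin.le_last j).lt_or_eq with h | rfl
  · simp [geomTail_apply_of_lt N h, h.ne]
  · simp [geomTail]

lemma geomTail_castSucc (p : Fin N) :
    geomTail N p.castSucc = (√2)⁻¹ • (geomTail N p.succ + EuclideanSpace.single p.castSucc 1) := by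
  ext j
  simp only [geomTail, PiLp.smul_apply, PiLp.add_apply, PiLp.single_apply, smul_eq_mul,
    Fin.lt_def, Fin.val_castSucc, Fin.val_succ, Fin.ext_iff]
  split_ifs <;> first | omega | simp only [add_zero, zero_add, mul_zero, mul_one]
  · exact (congrArg _ (by omega)).trans (pow_one _)
  all_goals rw [← pow_succ']; congr 1; omega

lemma inner_geomTail_succ_single (p : Fin N) :
    ⟪geomTail N p.succ, EuclideanSpace.single p.castSucc 1⟫ = 0 := by
  simp [EuclideanSpace.inner_single_right, geomTail_apply_of_lt N Fin.castSucc_lt_succ]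

lemma norm_geomTail (m : Fin (N + 1)) : ‖geomTail N m‖ = 1 := by
  induction m using Fin.reverseInduction with
  | last => simp [geomTail_last]
  | cast p ih =>
    rw [geomTail_castSucc]
    exact norm_inv_sqrt_two_smul_add ih (by simp) (inner_geomTail_succ_single N p)

lemma norm_flipTail (p : Fin N) : ‖flipTail N p‖ = 1 :=
  norm_inv_sqrt_two_smul_sub (norm_geomTail N p.succ) (by simp) (inner_geomTail_succ_single N p)

lemma flipTail_apply_of_lt {p : Fin N} {j : Fin (N + 1)} (h : j < p.castSucc) :
    flipTail N p j = 0 := by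
  have h' : j < p.succ := h.trans Fin.castSucc_lt_succ
  simp [flipTail, geomTail_apply_of_lt N h', h.ne]

lemma inner_single_flipTail {a p : Fin N} (h : a < p) :
    ⟪EuclideanSpace.single a.castSucc 1, flipTail N p⟫ = 0 := by
  simp [EuclideanSpace.inner_single_left, flipTail_apply_of_lt N (Fin.castSucc_lt_castSucc_iff.mpr h)]

lemma inner_geomTail_flipTail {m : Fin (N + 1)} {p : Fin N} (h : m ≤ p.castSucc) :
    ⟪geomTail N m, flipTail N p⟫ = 0 := by
  induction m using Fin.reverseInduction with
  | last => exact absurd h (Fin.castSucc_lt_last p).not_ge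
  | cast a ih =>
    rcases (Fin.castSucc_le_castSucc_iff.mp h).lt_or_eq with hap | rfl
    · rw [geomTail_castSucc, real_inner_smul_left, inner_add_left,
        ih (Fin.succ_le_castSucc_iff.mpr hap), inner_single_flipTail N hap, add_zero, mul_zero]
    · rw [geomTail_castSucc, flipTail]
      exact inner_inv_sqrt_two_smul_add_sub (by simp [norm_geomTail])

lemma orthonormal_flipTail : Orthonormal ℝ (flipTail N) := by
  refine ⟨norm_flipTail N, fun a p hap => ?_⟩
  wlog h : a < p generalizing a p
  · exact real_inner_comm (flipTail N a) _ ▸ this p a hap.symm (hap.lt_or_gt.resolve_left h)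
  rw [flipTail, real_inner_smul_left, inner_sub_left,
    inner_geomTail_flipTail N (Fin.succ_le_castSucc_iff.mpr h), inner_single_flipTail N h,
    sub_zero, mul_zero]

lemma decode_zero (hN : 1 ≤ N) : decode N 0 = geomTail N 0 := by
  ext j
  simp only [decode, geomTail, WithLp.equiv_symm_apply, one_div, inv_sqrt_two_pow]
  split_ifs <;> first | omega | simp_all

lemma decode_succ (p : Fin N) : decode N p.succ = flipTail N p := by
  ext j
  simp only [decode, flipTail, geomTail, WithLp.equiv_symm_apply, one_div, inv_sqrt_two_pow,
    PiLp.smul_apply, PiLp.sub_apply, PiLp.single_apply, smul_eq_mul, Fin.lt_def,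
    Fin.val_castSucc, Fin.val_succ, Fin.ext_iff]
  split_ifs <;> first | omega | (simp_all; done) | ring1 |
    (rw [sub_zero, ← pow_succ']; congr 1; omega)

/-- The N+1 decoding vectors of the N-sender coherence-assisted protocol form an
orthonormal family (hence a projective measurement). -/
theorem decode_orthonormal (N : ℕ) (hN : 1 ≤ N) : Orthonormal ℝ (decode N) := by
  have hcons : decode N = (Fin.cons (geomTail N 0) (flipTail N) : Fin (N + 1) → _) := by
    funext k
    cases k using Fin.cases
    exacts [decode_zero N hN, decode_succ N _]
  rw [hcons]
  exact orthonormal_fin_cons (orthonormal_flipTail N) (norm_geomTail N 0)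
    fun p => inner_geomTail_flipTail N (Fin.zero_le _)
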